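/- arXiv:math/0602565 — 5 statements merged into one kernel-verified Lean document; each statement's English description precedes it below -/
import Mathlib

section
/- Let ψ : ℂ → Matrix (Fin 7) (Fin 7) ℝ be smooth and suppose that for every z ∈ ℂ the ℝ-linear map 𝕆 → 𝕆 that fixes 1 and sends each eᵢ to the i-th column of ψ(z) (expressed in the basis e₁,…,e₇ of Im 𝕆) is an automorphism of 𝕆. Suppose further there exist smooth a,b,c,d,e : ℂ → ℂ with ψ(z)⁻¹ (∂_z ψ)(z) = M(a(z), b(z), c(z), d(z), e(z)) for all z (ψ regarded as complex-matrix valued). Then the first column f₁ : ℂ → Im 𝕆 satisfies ‖f₁(z)‖ = 1 for all z, and f₁(z) · (∂_z f₁)(z) = i · (∂_z f₁)(z), where the octonion multiplication is extended ℂ-bilinearly to the complexification Im 𝕆 ⊗ ℂ ≅ ℂ⁷. (That is, the first column of a σ-primitive G₂-frame is an almost complex curve in S⁶.) -/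
noncomputable section

/-- The octonions, as pairs of quaternions. -/
abbrev Octo : Type := Quaternion ℝ × Quaternion ℝ

/-- Octonion multiplication. -/
def omul (x y : Octo) : Octo :=
  (x.1 * y.1 - star y.2 * x.2, y.2 * x.1 + x.2 * star y.1)

/-- The unit octonion. -/
def oone : Octo := (1, 0)

/-- The inner product on the octonions. -/
def oinner (x y : Octo) : ℝ :=
  (x.1 * star y.1).re + (x.2 * star y.2).re

/-- The real part of an octonion. -/
def oRe (x : Octo) : ℝ := x.1.re

/-- An octonion is imaginary if its real part vanishes. -/
def isIm (x : Octo) : Prop := oRe x = 0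

/-- The standard orthonormal basis e₁,…,e₇ of Im 𝕆. -/
def oe : Fin 7 → Octo :=
  ![((⟨0,1,0,0⟩ : Quaternion ℝ), 0),
    ((⟨0,0,1,0⟩ : Quaternion ℝ), 0),
    ((⟨0,0,0,1⟩ : Quaternion ℝ), 0),
    (0, 1),
    (0, (⟨0,1,0,0⟩ : Quaternion ℝ)),
    (0, (⟨0,0,1,0⟩ : Quaternion ℝ)),
    (0, (⟨0,0,0,1⟩ : Quaternion ℝ))]

open Complex

/-- Wirtinger derivative d/dz F = (1/2)(dF/dx - i dF/dy). -/
def wdz {E : Type*} [NormedAddCommGroup E] [NormedSpace ℂ E] (f : ℂ → E) (z : ℂ) : E :=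
  (2⁻¹ : ℂ) • (fderiv ℝ f z 1 - Complex.I • fderiv ℝ f z Complex.I)

/-- Wirtinger derivative d/dzbar F = (1/2)(dF/dx + i dF/dy). -/
def wdzbar {E : Type*} [NormedAddCommGroup E] [NormedSpace ℂ E] (f : ℂ → E) (z : ℂ) : E :=
  (2⁻¹ : ℂ) • (fderiv ℝ f z 1 + Complex.I • fderiv ℝ f z Complex.I)

/-- The skew-symmetric matrix M(a,b,c,d,e). -/
def Mmat (a b c d e : ℂ) : Matrix (Fin 7) (Fin 7) ℂ :=
  !![0, -c, I*c, 0, 0, 0, 0;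
     c, 0, -a, -d, I*d, 0, 0;
     -(I*c), a, 0, -(I*d), -d, 0, 0;
     0, d, I*d, 0, -b, -(e - I*c/2), -(I*e - c/2);
     0, -(I*d), d, b, 0, -(I*e + c/2), e + I*c/2;
     0, 0, 0, e - I*c/2, I*e + c/2, 0, -(a+b);
     0, 0, 0, I*e - c/2, -e - I*c/2, a+b, 0]

/-- Entrywise Wirtinger derivative d/dz of a matrix-valued map. -/
def wdzM (F : ℂ → Matrix (Fin 7) (Fin 7) ℂ) (z : ℂ) : Matrix (Fin 7) (Fin 7) ℂ :=
  Matrix.of fun i j => wdz (fun w => F w i j) z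

/-- Entrywise Wirtinger derivative d/dzbar of a matrix-valued map. -/
def wdzbarM (F : ℂ → Matrix (Fin 7) (Fin 7) ℂ) (z : ℂ) : Matrix (Fin 7) (Fin 7) ℂ :=
  Matrix.of fun i j => wdzbar (fun w => F w i j) z

/-- Structure constants: real part of the product of basis vectors of Im O. -/
def oreTab (i j : Fin 7) : ℝ := oRe (omul (oe i) (oe j))

/-- Structure constants: imaginary components of the product of basis vectors. -/
def cTab (i j k : Fin 7) : ℝ := oinner (omul (oe i) (oe j)) (oe k)

/-- The C-bilinear extension of octonion multiplication to (Im O) ⊗ C,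
with values in O ⊗ C, recorded as (real part, imaginary components). -/
def cmul (u v : Fin 7 → ℂ) : ℂ × (Fin 7 → ℂ) :=
  (∑ i, ∑ j, u i * v j * (oreTab i j : ℂ),
   fun k => ∑ i, ∑ j, u i * v j * (cTab i j k : ℂ))

/-- The norm on the octonions coming from the inner product. -/
def onorm (x : Octo) : ℝ := Real.sqrt (oinner x x)

/-! ### Auxiliary lemmas -/

open Quaternion

section Aux

lemma fin7_all {P : Fin 7 → Prop}
    (h0 : P 0) (h1 : P 1) (h2 : P 2) (h3 : P 3) (h4 : P 4) (h5 : P 5) (h6 : P 6) :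
    ∀ j, P j := by
  intro j; fin_cases j
  exacts [h0, h1, h2, h3, h4, h5, h6]

lemma oe_0 : oe 0 = ((⟨0,1,0,0⟩ : Quaternion ℝ), 0) := rfl
lemma oe_1 : oe 1 = ((⟨0,0,1,0⟩ : Quaternion ℝ), 0) := rfl
lemma oe_2 : oe 2 = ((⟨0,0,0,1⟩ : Quaternion ℝ), 0) := rfl
lemma oe_3 : oe 3 = (0, (1 : Quaternion ℝ)) := rfl
lemma oe_4 : oe 4 = (0, (⟨0,1,0,0⟩ : Quaternion ℝ)) := rfl
lemma oe_5 : oe 5 = (0, (⟨0,0,1,0⟩ : Quaternion ℝ)) := rfl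
lemma oe_6 : oe 6 = (0, (⟨0,0,0,1⟩ : Quaternion ℝ)) := rfl

lemma oinner_eq (x y : Octo) : oinner x y = x.1.re*y.1.re + x.1.imI*y.1.imI + x.1.imJ*y.1.imJ
    + x.1.imK*y.1.imK + (x.2.re*y.2.re + x.2.imI*y.2.imI + x.2.imJ*y.2.imJ + x.2.imK*y.2.imK) := by
  simp only [oinner, Quaternion.re_mul, Quaternion.re_star, Quaternion.imI_star,
    Quaternion.imJ_star, Quaternion.imK_star]
  ring

lemma oinner_oe : ∀ j k : Fin 7, oinner (oe j) (oe k) = if j = k then 1 else 0 := by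
  refine fin7_all ?_ ?_ ?_ ?_ ?_ ?_ ?_ <;>
  · refine fin7_all ?_ ?_ ?_ ?_ ?_ ?_ ?_ <;>
    · rw [oinner_eq]
      norm_num [oe_0, oe_1, oe_2, oe_3, oe_4, oe_5, oe_6, Quaternion.re_zero,
        Quaternion.imI_zero, Quaternion.imJ_zero, Quaternion.imK_zero,
        Quaternion.re_one, Quaternion.imI_one, Quaternion.imJ_one,
        Quaternion.imK_one, Fin.ext_iff]

lemma oRe_oe : ∀ j : Fin 7, oRe (oe j) = 0 := by
  refine fin7_all ?_ ?_ ?_ ?_ ?_ ?_ ?_ <;>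
    norm_num [oRe, oe_0, oe_1, oe_2, oe_3, oe_4, oe_5, oe_6]

lemma omul_e01 : omul (oe 0) (oe 1) = oe 2 := by
  simp only [omul, oone, Prod.ext_iff, Quaternion.ext_iff, Quaternion.re_mul, Quaternion.imI_mul,
    Quaternion.imJ_mul, Quaternion.imK_mul, Quaternion.re_star, Quaternion.imI_star,
    Quaternion.imJ_star, Quaternion.imK_star, Quaternion.re_sub, Quaternion.imI_sub,
    Quaternion.imJ_sub, Quaternion.imK_sub, Quaternion.re_add, Quaternion.imI_add,
    Quaternion.imJ_add, Quaternion.imK_add, Prod.fst_neg, Prod.snd_neg, Quaternion.re_neg,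
    Quaternion.imI_neg, Quaternion.imJ_neg, Quaternion.imK_neg]
  norm_num [oe_0, oe_1, oe_2, Quaternion.re_zero, Quaternion.imI_zero, Quaternion.imJ_zero,
    Quaternion.imK_zero, Quaternion.re_one, Quaternion.imI_one, Quaternion.imJ_one,
    Quaternion.imK_one]
lemma omul_e02 : omul (oe 0) (oe 2) = -oe 1 := by
  simp only [omul, oone, Prod.ext_iff, Quaternion.ext_iff, Quaternion.re_mul, Quaternion.imI_mul,
    Quaternion.imJ_mul, Quaternion.imK_mul, Quaternion.re_star, Quaternion.imI_star,
    Quaternion.imJ_star, Quaternion.imK_star, Quaternion.re_sub, Quaternion.imI_sub,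
    Quaternion.imJ_sub, Quaternion.imK_sub, Quaternion.re_add, Quaternion.imI_add,
    Quaternion.imJ_add, Quaternion.imK_add, Prod.fst_neg, Prod.snd_neg, Quaternion.re_neg,
    Quaternion.imI_neg, Quaternion.imJ_neg, Quaternion.imK_neg]
  norm_num [oe_0, oe_1, oe_2, Quaternion.re_zero, Quaternion.imI_zero, Quaternion.imJ_zero,
    Quaternion.imK_zero, Quaternion.re_one, Quaternion.imI_one, Quaternion.imJ_one,
    Quaternion.imK_one]
lemma omul_e00 : omul (oe 0) (oe 0) = -oone := by
  simp only [omul, oone, Prod.ext_iff, Quaternion.ext_iff, Quaternion.re_mul, Quaternion.imI_mul,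
    Quaternion.imJ_mul, Quaternion.imK_mul, Quaternion.re_star, Quaternion.imI_star,
    Quaternion.imJ_star, Quaternion.imK_star, Quaternion.re_sub, Quaternion.imI_sub,
    Quaternion.imJ_sub, Quaternion.imK_sub, Quaternion.re_add, Quaternion.imI_add,
    Quaternion.imJ_add, Quaternion.imK_add, Prod.fst_neg, Prod.snd_neg, Quaternion.re_neg,
    Quaternion.imI_neg, Quaternion.imJ_neg, Quaternion.imK_neg]
  norm_num [oe_0, oe_1, oe_2, Quaternion.re_zero, Quaternion.imI_zero, Quaternion.imJ_zero,
    Quaternion.imK_zero, Quaternion.re_one, Quaternion.imI_one, Quaternion.imJ_one,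
    Quaternion.imK_one]

lemma omul_add_left (x y z : Octo) : omul (x + y) z = omul x z + omul y z := by
  simp only [omul, Prod.fst_add, Prod.snd_add, Prod.mk_add_mk, Prod.mk.injEq]
  constructor <;> noncomm_ring
lemma omul_add_right (x y z : Octo) : omul x (y + z) = omul x y + omul x z := by
  simp only [omul, Prod.fst_add, Prod.snd_add, Prod.mk_add_mk, Prod.mk.injEq, star_add]
  constructor <;> noncomm_ring
lemma omul_smul_left (r : ℝ) (x y : Octo) : omul (r • x) y = r • omul x y := by
  simp only [omul, Prod.smul_fst, Prod.smul_snd, Prod.smul_mk, Prod.mk.injEq,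
    smul_mul_assoc, mul_smul_comm, smul_sub, smul_add]
lemma omul_smul_right (r : ℝ) (x y : Octo) : omul x (r • y) = r • omul x y := by
  have h1 : star (r • y.2) = r • star y.2 := by simp
  have h2 : star (r • y.1) = r • star y.1 := by simp
  simp only [omul, Prod.smul_fst, Prod.smul_snd, Prod.smul_mk, h1, h2,
    smul_mul_assoc, mul_smul_comm, smul_sub, smul_add]

lemma oRe_add (x y : Octo) : oRe (x + y) = oRe x + oRe y := rfl
lemma oRe_smul (r : ℝ) (x : Octo) : oRe (r • x) = r * oRe x := rfl
lemma oRe_neg (x : Octo) : oRe (-x) = -oRe x := rfl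
lemma oRe_sum {ι : Type*} (s : Finset ι) (f : ι → Octo) :
    oRe (∑ i ∈ s, f i) = ∑ i ∈ s, oRe (f i) := by
  classical
  induction s using Finset.induction with
  | empty => simp [oRe]
  | insert _ _ h ih => simp [Finset.sum_insert h, oRe_add, ih]

lemma oinner_add_left (x y z : Octo) : oinner (x + y) z = oinner x z + oinner y z := by
  simp only [oinner, Prod.fst_add, Prod.snd_add, add_mul]
  simp; ring
lemma oinner_smul_left (r : ℝ) (x y : Octo) : oinner (r • x) y = r * oinner x y := by
  simp only [oinner, Prod.smul_fst, Prod.smul_snd, smul_mul_assoc]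
  simp; ring
lemma oinner_neg_left (x y : Octo) : oinner (-x) y = -oinner x y := by
  simpa using oinner_smul_left (-1) x y
lemma oinner_sum_left {ι : Type*} (s : Finset ι) (f : ι → Octo) (y : Octo) :
    oinner (∑ i ∈ s, f i) y = ∑ i ∈ s, oinner (f i) y := by
  classical
  induction s using Finset.induction with
  | empty => simp [oinner]
  | insert _ _ h ih => simp [Finset.sum_insert h, oinner_add_left, ih]

lemma sum_oinner_oe (w : Fin 7 → ℝ) (k : Fin 7) :
    oinner (∑ j, w j • oe j) (oe k) = w k := by
  rw [oinner_sum_left]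
  simp [oinner_smul_left, oinner_oe]

lemma omul_sum_left {ι : Type*} (s : Finset ι) (f : ι → Octo) (y : Octo) :
    omul (∑ i ∈ s, f i) y = ∑ i ∈ s, omul (f i) y := by
  classical
  induction s using Finset.induction with
  | empty => simp [omul]
  | insert _ _ h ih => simp [Finset.sum_insert h, omul_add_left, ih]
lemma omul_sum_right {ι : Type*} (s : Finset ι) (f : ι → Octo) (x : Octo) :
    omul x (∑ i ∈ s, f i) = ∑ i ∈ s, omul x (f i) := by
  classical
  induction s using Finset.induction with
  | empty => simp [omul]
  | insert _ _ h ih => simp [Finset.sum_insert h, omul_add_right, ih]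

lemma omul_sum_sum (u v : Fin 7 → ℝ) :
    omul (∑ i, u i • oe i) (∑ j, v j • oe j)
      = ∑ i, ∑ j, (u i * v j) • omul (oe i) (oe j) := by
  rw [omul_sum_left]
  refine Finset.sum_congr rfl fun i _ => ?_
  rw [omul_sum_right]
  refine Finset.sum_congr rfl fun j _ => ?_
  rw [omul_smul_left, omul_smul_right, smul_smul]

lemma keyRe (u v : Fin 7 → ℝ) :
    oRe (omul (∑ i, u i • oe i) (∑ j, v j • oe j))
      = ∑ i, ∑ j, u i * v j * oreTab i j := by
  rw [omul_sum_sum, oRe_sum]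
  refine Finset.sum_congr rfl fun i _ => ?_
  rw [oRe_sum]
  refine Finset.sum_congr rfl fun j _ => ?_
  rw [oRe_smul]
  unfold oreTab
  ring

lemma keyInner (u v : Fin 7 → ℝ) (k : Fin 7) :
    oinner (omul (∑ i, u i • oe i) (∑ j, v j • oe j)) (oe k)
      = ∑ i, ∑ j, u i * v j * cTab i j k := by
  rw [omul_sum_sum, oinner_sum_left]
  refine Finset.sum_congr rfl fun i _ => ?_
  rw [oinner_sum_left]
  refine Finset.sum_congr rfl fun j _ => ?_
  rw [oinner_smul_left]
  unfold cTab
  ring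

lemma wdz_pi {ι : Type*} [Fintype ι] (f : ℂ → ι → ℂ) (z : ℂ)
    (h : ∀ i, DifferentiableAt ℝ (fun w => f w i) z) :
    wdz f z = fun i => wdz (fun w => f w i) z := by
  have hf : fderiv ℝ f z = ContinuousLinearMap.pi fun i => fderiv ℝ (fun w => f w i) z :=
    fderiv_pi h
  funext i
  simp [wdz, hf]

lemma sum2_split (T : Fin 7 → Fin 7 → ℂ) (u v w : Fin 7 → ℂ) (s t : ℂ) :
    ∑ i, ∑ j, u i * (s * v j - t * w j) * T i j
      = s * (∑ i, ∑ j, u i * v j * T i j) - t * (∑ i, ∑ j, u i * w j * T i j) := by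
  rw [Finset.mul_sum, Finset.mul_sum, ← Finset.sum_sub_distrib]
  refine Finset.sum_congr rfl fun i _ => ?_
  rw [Finset.mul_sum, Finset.mul_sum, ← Finset.sum_sub_distrib]
  exact Finset.sum_congr rfl fun j _ => by ring

end Aux

theorem statement1 (ψ : ℂ → Matrix (Fin 7) (Fin 7) ℝ) (a b c d e : ℂ → ℂ)
    (hψ : ∀ i j : Fin 7, ContDiff ℝ (⊤ : ℕ∞) (fun z => ψ z i j))
    (ha : ContDiff ℝ (⊤ : ℕ∞) a) (hb : ContDiff ℝ (⊤ : ℕ∞) b) (hc : ContDiff ℝ (⊤ : ℕ∞) c)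
    (hd : ContDiff ℝ (⊤ : ℕ∞) d) (he : ContDiff ℝ (⊤ : ℕ∞) e)
    -- for every z, the unital linear extension of eᵢ ↦ (i-th column of ψ(z)) is an
    -- automorphism of the octonions:
    (hG2 : ∀ z : ℂ, ∃ g : Octo →ₗ[ℝ] Octo,
        Function.Bijective g ∧
        (∀ x y : Octo, g (omul x y) = omul (g x) (g y)) ∧
        g oone = oone ∧
        ∀ i : Fin 7, g (oe i) = ∑ j : Fin 7, ψ z j i • oe j)
    -- ψ is a σ-primitive frame:
    (hprim : ∀ z : ℂ,
        ((fun w => (ψ w).map Complex.ofReal) z)⁻¹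
            * wdzM (fun w => (ψ w).map Complex.ofReal) z
          = Mmat (a z) (b z) (c z) (d z) (e z)) :
    -- the first column f₁ is an almost complex curve in S⁶:
    (∀ z : ℂ, onorm (∑ j : Fin 7, ψ z j 0 • oe j) = 1) ∧
    (∀ z : ℂ,
        cmul (fun j => (ψ z j 0 : ℂ)) (wdz (fun w j => (ψ w j 0 : ℂ)) z)
          = (0, Complex.I • wdz (fun w j => (ψ w j 0 : ℂ)) z)) := by
  have main2 : ∀ z : ℂ,
      cmul (fun j => (ψ z j 0 : ℂ)) (wdz (fun w j => (ψ w j 0 : ℂ)) z)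
        = (0, Complex.I • wdz (fun w j => (ψ w j 0 : ℂ)) z) := by
    intro z
    obtain ⟨g, hgbij, hgmul, hgone, hgcol⟩ := hG2 z
    -- the three columns
    set x0 : Octo := ∑ j : Fin 7, ψ z j 0 • oe j with hx0
    set x1 : Octo := ∑ j : Fin 7, ψ z j 1 • oe j with hx1
    set x2 : Octo := ∑ j : Fin 7, ψ z j 2 • oe j with hx2
    have hx01 : omul x0 x1 = x2 := by
      rw [hx0, hx1, hx2, ← hgcol 0, ← hgcol 1, ← hgcol 2, ← hgmul, omul_e01]
    have hx02 : omul x0 x2 = -x1 := by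
      rw [hx0, hx1, hx2, ← hgcol 0, ← hgcol 2, ← hgmul, omul_e02, map_neg, hgcol 1]
    -- invertibility of ψ z
    have hg : ∀ v : Fin 7 → ℝ,
        g (∑ i, v i • oe i) = ∑ j, ((ψ z).mulVec v) j • oe j := by
      intro v
      rw [map_sum]
      have h1 : ∀ i : Fin 7, g (v i • oe i) = ∑ j, (ψ z j i * v i) • oe j := by
        intro i
        rw [map_smul, hgcol i, Finset.smul_sum]
        refine Finset.sum_congr rfl fun j _ => ?_
        rw [smul_smul, mul_comm]
      rw [Finset.sum_congr rfl fun i _ => h1 i, Finset.sum_comm]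
      refine Finset.sum_congr rfl fun j _ => ?_
      rw [Matrix.mulVec, dotProduct, ← Finset.sum_smul]
    have hinj : Function.Injective (Matrix.mulVec (ψ z)) := by
      intro v w hvw
      have h2 : g (∑ i, v i • oe i) = g (∑ i, w i • oe i) := by rw [hg, hg, hvw]
      have h3 := hgbij.injective h2
      funext k
      have h4 := congrArg (fun x => oinner x (oe k)) h3
      simpa [sum_oinner_oe] using h4
    have hdet : IsUnit ((ψ z).map Complex.ofReal).det := by
      have h1 : IsUnit (ψ z) := Matrix.mulVec_injective_iff_isUnit.mp hinj
      have h2 : IsUnit (ψ z).det := (Matrix.isUnit_iff_isUnit_det (ψ z)).mp h1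
      have h3 : ((ψ z).map Complex.ofReal).det = ((ψ z).det : ℂ) := by
        rw [show (ψ z).map Complex.ofReal = Complex.ofRealHom.mapMatrix (ψ z) from rfl,
          ← RingHom.map_det]; rfl
      rw [h3]
      simp [isUnit_iff_ne_zero, h2.ne_zero]
    -- the structure equation
    have hW : wdzM (fun w => (ψ w).map Complex.ofReal) z
        = ((ψ z).map Complex.ofReal) * Mmat (a z) (b z) (c z) (d z) (e z) := by
      have h := hprim z
      calc wdzM (fun w => (ψ w).map Complex.ofReal) z
          = (((ψ z).map Complex.ofReal) * ((ψ z).map Complex.ofReal)⁻¹)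
              * wdzM (fun w => (ψ w).map Complex.ofReal) z := by
            rw [Matrix.mul_nonsing_inv _ hdet, one_mul]
        _ = ((ψ z).map Complex.ofReal)
              * (((fun w => (ψ w).map Complex.ofReal) z)⁻¹
                  * wdzM (fun w => (ψ w).map Complex.ofReal) z) := by
            rw [Matrix.mul_assoc]
        _ = _ := by rw [h]
    -- derivative of the first column
    have hdiff : ∀ j : Fin 7, DifferentiableAt ℝ (fun w => ((ψ w j 0 : ℝ) : ℂ)) z :=
      fun j => Complex.ofRealCLM.differentiable.differentiableAt.comp z
        (((hψ j 0).differentiable (by simp)).differentiableAt)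
    have hD : wdz (fun w j => (ψ w j 0 : ℂ)) z
        = fun j => c z * ((ψ z j 1 : ℝ) : ℂ) - (Complex.I * c z) * ((ψ z j 2 : ℝ) : ℂ) := by
      rw [wdz_pi _ _ hdiff]
      funext j
      have h1 : wdz (fun w => ((ψ w j 0 : ℝ) : ℂ)) z
          = wdzM (fun w => (ψ w).map Complex.ofReal) z j 0 := rfl
      rw [h1, hW, Matrix.mul_apply, Fin.sum_univ_seven]
      show (ψ z).map Complex.ofReal j 0 * 0 + (ψ z).map Complex.ofReal j 1 * c z
          + (ψ z).map Complex.ofReal j 2 * (-(Complex.I * c z))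
          + (ψ z).map Complex.ofReal j 3 * 0 + (ψ z).map Complex.ofReal j 4 * 0
          + (ψ z).map Complex.ofReal j 5 * 0 + (ψ z).map Complex.ofReal j 6 * 0 = _
      simp only [Matrix.map_apply]
      ring
    -- coercion of the structure-constant sums
    have hcast1 : ∀ v : Fin 7 → ℝ,
        (∑ i, ∑ j, ((ψ z i 0 : ℝ) : ℂ) * ((v j : ℝ) : ℂ) * (oreTab i j : ℂ))
          = ((oRe (omul x0 (∑ j, v j • oe j)) : ℝ) : ℂ) := by
      intro v
      rw [hx0, keyRe]
      push_cast
      rfl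
    have hcast2 : ∀ (v : Fin 7 → ℝ) (k : Fin 7),
        (∑ i, ∑ j, ((ψ z i 0 : ℝ) : ℂ) * ((v j : ℝ) : ℂ) * (cTab i j k : ℂ))
          = ((oinner (omul x0 (∑ j, v j • oe j)) (oe k) : ℝ) : ℂ) := by
      intro v k
      rw [hx0, keyInner]
      push_cast
      rfl
    rw [hD]
    unfold cmul
    refine Prod.ext ?_ ?_
    · show (∑ i, ∑ j, ((ψ z i 0 : ℝ) : ℂ)
          * (c z * ((ψ z j 1 : ℝ) : ℂ) - (Complex.I * c z) * ((ψ z j 2 : ℝ) : ℂ))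
          * (oreTab i j : ℂ)) = 0
      rw [sum2_split, hcast1 (fun j => ψ z j 1), hcast1 (fun j => ψ z j 2)]
      rw [← hx1, ← hx2, hx01, hx02]
      have hr2 : oRe x2 = 0 := by
        rw [hx2, oRe_sum]; simp [oRe_smul, oRe_oe]
      have hr1 : oRe (-x1) = 0 := by
        rw [oRe_neg, hx1, oRe_sum]; simp [oRe_smul, oRe_oe]
      rw [hr2, hr1]
      simp
    · funext k
      show (∑ i, ∑ j, ((ψ z i 0 : ℝ) : ℂ)
          * (c z * ((ψ z j 1 : ℝ) : ℂ) - (Complex.I * c z) * ((ψ z j 2 : ℝ) : ℂ))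
          * (cTab i j k : ℂ)) = _
      rw [sum2_split, hcast2 (fun j => ψ z j 1) k, hcast2 (fun j => ψ z j 2) k]
      rw [← hx1, ← hx2, hx01, hx02]
      have hi2 : oinner x2 (oe k) = ψ z k 2 := by rw [hx2]; exact sum_oinner_oe _ k
      have hi1 : oinner (-x1) (oe k) = -(ψ z k 1) := by
        rw [oinner_neg_left, hx1, sum_oinner_oe]
      rw [hi2, hi1]
      show _ = Complex.I
          * (c z * ((ψ z k 1 : ℝ) : ℂ) - (Complex.I * c z) * ((ψ z k 2 : ℝ) : ℂ))
      push_cast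
      linear_combination (c z * ((ψ z k 2 : ℝ) : ℂ)) * Complex.I_sq
  refine ⟨?_, main2⟩
  intro z
  obtain ⟨g, hgbij, hgmul, hgone, hgcol⟩ := hG2 z
  set x : Octo := ∑ j : Fin 7, ψ z j 0 • oe j with hx
  have hxx : omul x x = -oone := by
    rw [hx, ← hgcol 0, ← hgmul, omul_e00, map_neg, hgone]
  have hRe : oRe x = 0 := by
    rw [hx, oRe_sum]; simp [oRe_smul, oRe_oe]
  have h1 : x.1 * x.1 - star x.2 * x.2 = -1 := congrArg Prod.fst hxx
  have hpre : x.1.re = 0 := hRe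
  have hstar : star x.1 = -x.1 := by
    ext <;> simp [hpre]
  have hpp : x.1 * x.1 = -((Quaternion.normSq x.1 : ℝ) : Quaternion ℝ) := by
    calc x.1 * x.1 = -(star x.1 * x.1) := by rw [hstar, neg_mul, neg_neg]
      _ = _ := by rw [Quaternion.star_mul_self]
  have hqq : star x.2 * x.2 = ((Quaternion.normSq x.2 : ℝ) : Quaternion ℝ) :=
    Quaternion.star_mul_self x.2
  rw [hpp, hqq] at h1
  have h2 := congrArg QuaternionAlgebra.re h1
  simp at h2
  have h3 : Quaternion.normSq x.1 + Quaternion.normSq x.2 = 1 := by linarith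
  have hin : oinner x x = 1 := by
    simp only [oinner, Quaternion.self_mul_star]
    simpa using h3
  simp [onorm, hin]
end
end

section
/- Let a,b,c,d,e : ℂ → ℂ be smooth functions satisfying System (S), and suppose b(z) = −a(z) for all z and e(z) ≠ 0 for all z. Then the function α := c/(2e) : ℂ → ℂ is constant, and |α| = 1. -/
noncomputable section

/-- System (S). -/
def SystemS (a b c d e : ℂ → ℂ) : Prop :=
  (∀ z, wdzbar a z - wdz (fun w => starRingEnd ℂ (a w)) z
      = Complex.I * (2 * (‖c z‖ : ℂ)^2 - 4 * (‖d z‖ : ℂ)^2)) ∧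
  (∀ z, wdzbar b z - wdz (fun w => starRingEnd ℂ (b w)) z
      = Complex.I * (-(‖c z‖ : ℂ)^2 + 4 * (‖d z‖ : ℂ)^2
          - 4 * (‖e z‖ : ℂ)^2)) ∧
  (∀ z, wdzbar c z = -Complex.I * starRingEnd ℂ (a z) * c z) ∧
  (∀ z, wdzbar d z = Complex.I * (starRingEnd ℂ (a z) - starRingEnd ℂ (b z)) * d z) ∧
  (∀ z, wdzbar e z = Complex.I * (starRingEnd ℂ (a z) + 2 * starRingEnd ℂ (b z)) * e z)

/-- A real-linear map on ℂ satisfying the Cauchy–Riemann condition is complex-linear. -/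
lemma clm_of_CR (L : ℂ →L[ℝ] ℂ) (h : L Complex.I = Complex.I * L 1) (v : ℂ) :
    L v = v * L 1 := by
  have hv : v = (v.re : ℝ) • (1:ℂ) + (v.im : ℝ) • Complex.I := by
    simpa [Complex.real_smul] using (Complex.re_add_im v).symm
  calc L v = L ((v.re : ℝ) • (1:ℂ) + (v.im : ℝ) • Complex.I) := by rw [← hv]
    _ = (v.re : ℝ) • L 1 + (v.im : ℝ) • L Complex.I := by rw [map_add, map_smul, map_smul]
    _ = v * L 1 := by
        rw [h]; simp only [Complex.real_smul]
        linear_combination (L 1) * (Complex.re_add_im v)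

theorem statement3 (a b c d e : ℂ → ℂ)
    (ha : ContDiff ℝ (⊤ : ℕ∞) a) (hb : ContDiff ℝ (⊤ : ℕ∞) b) (hc : ContDiff ℝ (⊤ : ℕ∞) c)
    (hd : ContDiff ℝ (⊤ : ℕ∞) d) (he : ContDiff ℝ (⊤ : ℕ∞) e)
    (hS : SystemS a b c d e)
    (hba : ∀ z, b z = -a z) (he0 : ∀ z, e z ≠ 0) :
    (∀ z w : ℂ, c z / (2 * e z) = c w / (2 * e w)) ∧
    (∀ z : ℂ, ‖c z / (2 * e z)‖ = 1) := by
  set α : ℂ → ℂ := fun w => c w * (2 * e w)⁻¹ with hα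
  have hαdiv : ∀ w, c w / (2 * e w) = α w := fun w => div_eq_mul_inv _ _
  have h2e0 : ∀ w, (2 : ℂ) * e w ≠ 0 := fun w => mul_ne_zero two_ne_zero (he0 w)
  -- |c| = 2 |e|
  have habs : ∀ z, ‖c z‖ = 2 * ‖e z‖ := by
    intro z
    have hbf : b = fun w => -a w := funext hba
    have h1 := hS.1 z
    have h2 := hS.2.1 z
    rw [hbf] at h2
    simp only [wdzbar, wdz, map_neg, fderiv_fun_neg, ContinuousLinearMap.neg_apply,
      smul_eq_mul] at h1 h2
    have key : (‖c z‖ : ℂ)^2 = 4 * (‖e z‖ : ℂ)^2 := by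
      linear_combination Complex.I * h1 + Complex.I * h2 +
        ((‖c z‖ : ℂ)^2 - 4 * (‖e z‖ : ℂ)^2) * Complex.I_sq
    have keyR : (‖c z‖)^2 = 4 * (‖e z‖)^2 := by exact_mod_cast key
    have h0c := norm_nonneg (c z)
    have h0e := norm_nonneg (e z)
    nlinarith [keyR, h0c, h0e]
  -- α is entire
  have hdiff : Differentiable ℂ α := by
    intro z
    set k := starRingEnd ℂ (a z) with hk
    have hcd : HasFDerivAt c (fderiv ℝ c z) z :=
      ((hc.differentiable (by simp)) z).hasFDerivAt
    have hed : HasFDerivAt e (fderiv ℝ e z) z :=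
      ((he.differentiable (by simp)) z).hasFDerivAt
    have hu : HasFDerivAt (fun w => (2:ℂ) * e w) ((2:ℂ) • fderiv ℝ e z) z :=
      hed.const_mul 2
    have hinv : HasFDerivAt (fun w => ((2:ℂ) * e w)⁻¹)
        ((-(ContinuousLinearMap.mulLeftRight ℝ ℂ ((2:ℂ)*e z)⁻¹ ((2:ℂ)*e z)⁻¹)).comp
          ((2:ℂ) • fderiv ℝ e z)) z :=
      (hasFDerivAt_inv' (h2e0 z)).comp z hu
    have hαd : HasFDerivAt α
        (c z • ((-(ContinuousLinearMap.mulLeftRight ℝ ℂ ((2:ℂ)*e z)⁻¹ ((2:ℂ)*e z)⁻¹)).comp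
          ((2:ℂ) • fderiv ℝ e z)) +
          (fderiv ℝ c z).smulRight (((2:ℂ)*e z)⁻¹)) z :=
      hcd.mul' hinv
    set L := c z • ((-(ContinuousLinearMap.mulLeftRight ℝ ℂ ((2:ℂ)*e z)⁻¹ ((2:ℂ)*e z)⁻¹)).comp
          ((2:ℂ) • fderiv ℝ e z)) +
          (fderiv ℝ c z).smulRight (((2:ℂ)*e z)⁻¹) with hL
    -- the system's equations at z
    have hLc : fderiv ℝ c z 1 + Complex.I * fderiv ℝ c z Complex.I
        = -2 * Complex.I * k * c z := by
      have h := hS.2.2.1 z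
      simp only [wdzbar, smul_eq_mul] at h
      linear_combination 2 * h
    have hLe : fderiv ℝ e z 1 + Complex.I * fderiv ℝ e z Complex.I
        = -2 * Complex.I * k * e z := by
      have h := hS.2.2.2.2 z
      simp only [wdzbar, smul_eq_mul, hba z, map_neg] at h
      linear_combination 2 * h
    have hAI : fderiv ℝ c z Complex.I = -2*k*c z + Complex.I * fderiv ℝ c z 1 := by
      linear_combination (-Complex.I) * hLc +
        (fderiv ℝ c z Complex.I + 2*k*c z) * Complex.I_sq
    have hBI : fderiv ℝ e z Complex.I = -2*k*e z + Complex.I * fderiv ℝ e z 1 := by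
      linear_combination (-Complex.I) * hLe +
        (fderiv ℝ e z Complex.I + 2*k*e z) * Complex.I_sq
    have hCR : L Complex.I = Complex.I * L 1 := by
      simp only [hL, ContinuousLinearMap.add_apply, ContinuousLinearMap.smul_apply,
        ContinuousLinearMap.comp_apply, ContinuousLinearMap.neg_apply,
        ContinuousLinearMap.mulLeftRight_apply, ContinuousLinearMap.smulRight_apply,
        ContinuousLinearMap.one_apply, smul_eq_mul]
      rw [hAI, hBI]
      field_simp [he0 z]
      ring
    have hm : (ContinuousLinearMap.smulRight (1 : ℂ →L[ℂ] ℂ) (L 1)).restrictScalars ℝ = L := by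
      ext v
      rw [show L v = v * L 1 from clm_of_CR L hCR v]
      simp
    exact (hasFDerivAt_of_restrictScalars (𝕜 := ℝ) hαd hm).differentiableAt
  -- |α| = 1
  have habs1 : ∀ z, ‖α z‖ = 1 := by
    intro z
    have : ‖α z‖ = ‖c z‖ / (2 * ‖e z‖) := by
      rw [hα]
      simp [norm_mul, norm_inv, div_eq_mul_inv]
    rw [this, habs z]
    have : ‖e z‖ ≠ 0 := by
      simpa [norm_eq_zero] using he0 z
    field_simp
  -- boundedness and Liouville
  have hbd : Bornology.IsBounded (Set.range α) := by
    rw [Metric.isBounded_iff_subset_closedBall 0]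
    exact ⟨1, by rintro x ⟨z, rfl⟩; simp [Complex.dist_eq, habs1 z]⟩
  refine ⟨fun z w => ?_, fun z => ?_⟩
  · rw [hαdiv z, hαdiv w]
    exact hdiff.apply_eq_apply_of_bounded hbd z w
  · rw [hαdiv z]; exact habs1 z
end
end

section
/- Let ψ : ℂ → Matrix (Fin 7) (Fin 7) ℝ be smooth with ψ(z) invertible for all z, and suppose there exist smooth a,b,c,d,e : ℂ → ℂ with ψ(z)⁻¹(∂_z ψ)(z) = M(a(z),b(z),c(z),d(z),e(z)) for all z (ψ regarded as complex-matrix valued). Let f₁,…,f₇ : ℂ → ℂ⁷ denote the columns of ψ. Then ∂_z̄(f₆ + i f₇) = −2·(conj e)·(f₄ − i f₅) − i·(conj a + conj b)·(f₆ + i f₇). In particular, if e ≡ 0 then ∂_z̄(f₆ + i f₇) is at every point a complex scalar multiple of (f₆ + i f₇). -/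
noncomputable section


open Complex

lemma key_sum (a b c d e : ℂ) (p : Fin 7 → ℝ) :
    (starRingEnd ℂ) (∑ l, (p l : ℂ) * Mmat a b c d e l 5)
      + Complex.I * (starRingEnd ℂ) (∑ l, (p l : ℂ) * Mmat a b c d e l 6)
    = (-2 * starRingEnd ℂ e) * ((p 3 : ℂ) - Complex.I * (p 4 : ℂ))
      - (Complex.I * (starRingEnd ℂ a + starRingEnd ℂ b)) * ((p 5 : ℂ) + Complex.I * (p 6 : ℂ)) := by
  rw [Fin.sum_univ_seven, Fin.sum_univ_seven]
  rw [show Mmat a b c d e 0 5 = 0 from rfl, show Mmat a b c d e 1 5 = 0 from rfl,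
      show Mmat a b c d e 2 5 = 0 from rfl, show Mmat a b c d e 3 5 = -(e - I*c/2) from rfl,
      show Mmat a b c d e 4 5 = -(I*e + c/2) from rfl, show Mmat a b c d e 5 5 = 0 from rfl,
      show Mmat a b c d e 6 5 = a + b from rfl,
      show Mmat a b c d e 0 6 = 0 from rfl, show Mmat a b c d e 1 6 = 0 from rfl,
      show Mmat a b c d e 2 6 = 0 from rfl, show Mmat a b c d e 3 6 = -(I*e - c/2) from rfl,
      show Mmat a b c d e 4 6 = e + I*c/2 from rfl, show Mmat a b c d e 5 6 = -(a+b) from rfl,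
      show Mmat a b c d e 6 6 = 0 from rfl]
  simp only [map_add, map_mul, map_sub, map_neg, map_zero, map_div₀, map_ofNat,
    Complex.conj_I, Complex.conj_ofReal, mul_zero, add_zero, zero_add]
  linear_combination (↑(p 3) * (starRingEnd ℂ) e - (starRingEnd ℂ) c * ↑(p 4) / 2
    + ↑(p 6) * ((starRingEnd ℂ) a + (starRingEnd ℂ) b)) * Complex.I_sq

set_option maxRecDepth 2000

theorem statement4 (ψ : ℂ → Matrix (Fin 7) (Fin 7) ℝ) (a b c d e : ℂ → ℂ)
    (hψ : ∀ i j : Fin 7, ContDiff ℝ (⊤ : ℕ∞) (fun z => ψ z i j))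
    (hinv : ∀ z : ℂ, IsUnit (ψ z))
    (ha : ContDiff ℝ (⊤ : ℕ∞) a) (hb : ContDiff ℝ (⊤ : ℕ∞) b) (hc : ContDiff ℝ (⊤ : ℕ∞) c)
    (hd : ContDiff ℝ (⊤ : ℕ∞) d) (he : ContDiff ℝ (⊤ : ℕ∞) e)
    (hprim : ∀ z : ℂ,
        ((fun w => (ψ w).map Complex.ofReal) z)⁻¹
            * wdzM (fun w => (ψ w).map Complex.ofReal) z
          = Mmat (a z) (b z) (c z) (d z) (e z)) :
    -- writing fᵢ for the i-th column of ψ (regarded as ℂ⁷-valued):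
    (∀ z : ℂ,
        wdzbar (fun w (j : Fin 7) => (ψ w j 5 : ℂ) + Complex.I * (ψ w j 6 : ℂ)) z
          = (-2 * starRingEnd ℂ (e z)) •
              (fun j : Fin 7 => (ψ z j 3 : ℂ) - Complex.I * (ψ z j 4 : ℂ))
            - (Complex.I * (starRingEnd ℂ (a z) + starRingEnd ℂ (b z))) •
              (fun j : Fin 7 => (ψ z j 5 : ℂ) + Complex.I * (ψ z j 6 : ℂ))) ∧
    ((∀ z : ℂ, e z = 0) → ∀ z : ℂ, ∃ μ : ℂ,
        wdzbar (fun w (j : Fin 7) => (ψ w j 5 : ℂ) + Complex.I * (ψ w j 6 : ℂ)) z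
          = μ • fun j : Fin 7 => (ψ z j 5 : ℂ) + Complex.I * (ψ z j 6 : ℂ)) := by
  have main : ∀ z : ℂ,
      wdzbar (fun w (j : Fin 7) => (ψ w j 5 : ℂ) + Complex.I * (ψ w j 6 : ℂ)) z
        = (-2 * starRingEnd ℂ (e z)) •
            (fun j : Fin 7 => (ψ z j 3 : ℂ) - Complex.I * (ψ z j 4 : ℂ))
          - (Complex.I * (starRingEnd ℂ (a z) + starRingEnd ℂ (b z))) •
            (fun j : Fin 7 => (ψ z j 5 : ℂ) + Complex.I * (ψ z j 6 : ℂ)) := by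
    intro z
    have hdiff : ∀ i j : Fin 7, HasFDerivAt (fun w => ψ w i j) (fderiv ℝ (fun w => ψ w i j) z) z :=
      fun i j => ((hψ i j).differentiable (by simp) z).hasFDerivAt
    set D : Fin 7 → Fin 7 → (ℂ →L[ℝ] ℝ) := fun i j => fderiv ℝ (fun w => ψ w i j) z with hDdef
    have hC : ∀ i j : Fin 7, HasFDerivAt (fun w => ((ψ w i j : ℝ) : ℂ))
        (Complex.ofRealCLM.comp (D i j)) z :=
      fun i j => Complex.ofRealCLM.hasFDerivAt.comp z (hdiff i j)
    -- determinant is a unit over ℂ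
    have hdet : IsUnit ((ψ z).map (Complex.ofReal)).det := by
      have hU : IsUnit ((ψ z).map (Complex.ofReal)) := by
        have h3 := (hinv z).map
          (Complex.ofRealHom.mapMatrix : Matrix (Fin 7) (Fin 7) ℝ →+* Matrix (Fin 7) (Fin 7) ℂ)
        exact h3
      exact (Matrix.isUnit_iff_isUnit_det _).mp hU
    -- matrix equation
    have hW : wdzM (fun w => (ψ w).map Complex.ofReal) z
        = (ψ z).map Complex.ofReal * Mmat (a z) (b z) (c z) (d z) (e z) := by
      have h1 := hprim z
      beta_reduce at h1
      rw [← h1, ← Matrix.mul_assoc, Matrix.mul_nonsing_inv _ hdet, Matrix.one_mul]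
    -- entrywise equation
    have hWe : ∀ j k : Fin 7,
        (2⁻¹ : ℂ) * (((D j k) 1 : ℂ) - Complex.I * ((D j k) Complex.I : ℂ))
          = ∑ l, ((ψ z j l : ℝ) : ℂ) * Mmat (a z) (b z) (c z) (d z) (e z) l k := by
      intro j k
      have h2 := congrFun (congrFun hW j) k
      simp only [wdzM, Matrix.of_apply, Matrix.mul_apply, Matrix.map_apply] at h2
      rw [← h2]
      simp [wdz, (hC j k).fderiv, smul_eq_mul]
    -- derivative of the pi-valued map
    set L : Fin 7 → (ℂ →L[ℝ] ℂ) :=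
      fun j => Complex.ofRealCLM.comp (D j 5) + Complex.I • Complex.ofRealCLM.comp (D j 6)
      with hLdef
    have hF : HasFDerivAt (fun w (j : Fin 7) => ((ψ w j 5 : ℝ) : ℂ) + Complex.I * ((ψ w j 6 : ℝ) : ℂ))
        (ContinuousLinearMap.pi L) z := by
      apply hasFDerivAt_pi.2
      intro j
      exact (hC j 5).add ((hC j 6).const_mul Complex.I)
    have hfd : fderiv ℝ (fun w (j : Fin 7) => ((ψ w j 5 : ℝ) : ℂ) + Complex.I * ((ψ w j 6 : ℝ) : ℂ)) z
        = ContinuousLinearMap.pi L := hF.fderiv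
    funext j
    have h5 := congrArg (starRingEnd ℂ) (hWe j 5)
    have h6 := congrArg (starRingEnd ℂ) (hWe j 6)
    simp only [map_mul, map_sub, map_add, map_inv₀, map_ofNat, Complex.conj_I,
      Complex.conj_ofReal] at h5 h6
    have key := key_sum (a z) (b z) (c z) (d z) (e z) (ψ z j)
    simp only [wdzbar, hfd, ContinuousLinearMap.pi_apply, hLdef,
      ContinuousLinearMap.add_apply, ContinuousLinearMap.coe_smul', Pi.smul_apply,
      ContinuousLinearMap.coe_comp', Function.comp_apply, Complex.ofRealCLM_apply,
      Pi.sub_apply, Pi.add_apply, smul_eq_mul]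
    linear_combination h5 + Complex.I * h6 + key
  refine ⟨main, fun he0 z => ⟨-(Complex.I * (starRingEnd ℂ (a z) + starRingEnd ℂ (b z))), ?_⟩⟩
  rw [main z]
  funext j
  simp [he0 z, neg_smul]
end
end

section
/- Let λ₁, λ₂ ∈ ℝ and let k be an invertible 7×7 real matrix. Then the map s ↦ exp(s · k⁻¹(λ₁Y₃ + λ₂Z₅)k) from ℝ to 7×7 real matrices (matrix exponential) is periodic — i.e. there exists T > 0 with exp((s+T)·k⁻¹(λ₁Y₃+λ₂Z₅)k) = exp(s·k⁻¹(λ₁Y₃+λ₂Z₅)k) for all s ∈ ℝ — if and only if λ₁ and λ₂ are linearly dependent over the rationals, i.e. there exist rationals (p,q) ≠ (0,0) with pλ₁ + qλ₂ = 0. -/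
set_option maxHeartbeats 2000000
set_option linter.unreachableTactic false
set_option linter.unusedTactic false
set_option linter.unnecessarySeqFocus false

noncomputable section

/-- The 14-parameter family of skew-symmetric matrices `G` (the Lie algebra 𝔤₂). -/
def Gmat (x2 x3 x4 x5 x6 x7 y3 y4 y5 y6 y7 z5 z6 z7 : ℝ) : Matrix (Fin 7) (Fin 7) ℝ :=
  !![0, -x2, -x3, -x4, -x5, -x6, -x7;
     x2, 0, -y3, -y4, -y5, -y6, -y7;
     x3, y3, 0, -(x6-y5), -(x7+y4), -(-x4+y7), -(-x5-y6);
     x4, y4, x6-y5, 0, -z5, -z6, -z7;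
     x5, y5, x7+y4, z5, 0, -(x2+z7), -(x3-z6);
     x6, y6, -x4+y7, z6, x2+z7, 0, -(y3+z5);
     x7, y7, -x5-y6, z7, x3-z6, y3+z5, 0]

def X2 : Matrix (Fin 7) (Fin 7) ℝ := Gmat 1 0 0 0 0 0 0 0 0 0 0 0 0 0
def X3 : Matrix (Fin 7) (Fin 7) ℝ := Gmat 0 1 0 0 0 0 0 0 0 0 0 0 0 0
def X4 : Matrix (Fin 7) (Fin 7) ℝ := Gmat 0 0 1 0 0 0 0 0 0 0 0 0 0 0
def X5 : Matrix (Fin 7) (Fin 7) ℝ := Gmat 0 0 0 1 0 0 0 0 0 0 0 0 0 0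
def X6 : Matrix (Fin 7) (Fin 7) ℝ := Gmat 0 0 0 0 1 0 0 0 0 0 0 0 0 0
def X7 : Matrix (Fin 7) (Fin 7) ℝ := Gmat 0 0 0 0 0 1 0 0 0 0 0 0 0 0
def Y3 : Matrix (Fin 7) (Fin 7) ℝ := Gmat 0 0 0 0 0 0 1 0 0 0 0 0 0 0
def Y4 : Matrix (Fin 7) (Fin 7) ℝ := Gmat 0 0 0 0 0 0 0 1 0 0 0 0 0 0
def Y5 : Matrix (Fin 7) (Fin 7) ℝ := Gmat 0 0 0 0 0 0 0 0 1 0 0 0 0 0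
def Y6 : Matrix (Fin 7) (Fin 7) ℝ := Gmat 0 0 0 0 0 0 0 0 0 1 0 0 0 0
def Y7 : Matrix (Fin 7) (Fin 7) ℝ := Gmat 0 0 0 0 0 0 0 0 0 0 1 0 0 0
def Z5 : Matrix (Fin 7) (Fin 7) ℝ := Gmat 0 0 0 0 0 0 0 0 0 0 0 1 0 0
def Z6 : Matrix (Fin 7) (Fin 7) ℝ := Gmat 0 0 0 0 0 0 0 0 0 0 0 0 1 0
def Z7 : Matrix (Fin 7) (Fin 7) ℝ := Gmat 0 0 0 0 0 0 0 0 0 0 0 0 0 1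


open scoped Real

@[simp] lemma cons_val_five'' {α : Type*} {m : ℕ} (x : α) (u : Fin (m+5) → α) :
    Matrix.vecCons x u 5 =
      Matrix.vecHead (Matrix.vecTail (Matrix.vecTail (Matrix.vecTail (Matrix.vecTail u)))) :=
  rfl

@[simp] lemma cons_val_six'' {α : Type*} {m : ℕ} (x : α) (u : Fin (m+6) → α) :
    Matrix.vecCons x u 6 =
      Matrix.vecHead (Matrix.vecTail (Matrix.vecTail (Matrix.vecTail (Matrix.vecTail (Matrix.vecTail u))))) :=
  rfl

def phiFun : ℝ × ℂ × ℂ × ℂ → Matrix (Fin 7) (Fin 7) ℝ := fun p =>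
  !![p.1, 0, 0, 0, 0, 0, 0;
     0, p.2.1.re, -p.2.1.im, 0, 0, 0, 0;
     0, p.2.1.im,  p.2.1.re, 0, 0, 0, 0;
     0, 0, 0, p.2.2.1.re, -p.2.2.1.im, 0, 0;
     0, 0, 0, p.2.2.1.im,  p.2.2.1.re, 0, 0;
     0, 0, 0, 0, 0, p.2.2.2.re, -p.2.2.2.im;
     0, 0, 0, 0, 0, p.2.2.2.im,  p.2.2.2.re]

def phi : (ℝ × ℂ × ℂ × ℂ) →+* Matrix (Fin 7) (Fin 7) ℝ where
  toFun := phiFun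
  map_one' := by
    ext i j
    fin_cases i <;> fin_cases j <;>
      (simp [phiFun, Matrix.one_apply, Prod.fst_one, Prod.snd_one]) <;> (first | rfl | ring)
  map_mul' x y := by
    ext i j
    fin_cases i <;> fin_cases j <;>
      (simp [phiFun, Matrix.mul_apply, Fin.sum_univ_seven, Complex.mul_re, Complex.mul_im,
        Prod.fst_mul, Prod.snd_mul, Matrix.vecHead, Matrix.vecTail, Function.comp]) <;>
      (first | rfl | ring)
  map_zero' := by
    ext i j
    fin_cases i <;> fin_cases j <;> (simp [phiFun]) <;> (first | rfl | ring)
  map_add' x y := by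
    ext i j
    fin_cases i <;> fin_cases j <;>
      (simp [phiFun, Prod.fst_add, Prod.snd_add, Complex.add_re, Complex.add_im]) <;>
      (first | rfl | ring)

lemma phi_cont : Continuous phi := by
  show Continuous phiFun
  apply continuous_matrix
  intro i j
  fin_cases i <;> fin_cases j <;>
    · simp [phiFun, Matrix.vecHead, Matrix.vecTail]
      fun_prop

lemma phi_eq_one_iff {x : ℝ × ℂ × ℂ × ℂ} : phi x = 1 ↔ x = 1 := by
  constructor
  · intro h
    obtain ⟨r, a, b, c⟩ := x
    have H : ∀ i j, phi (r, a, b, c) i j = (1 : Matrix (Fin 7) (Fin 7) ℝ) i j := by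
      intro i j; rw [h]
    have h1 : r = 1 := by simpa [phi, phiFun, Matrix.one_apply] using H 0 0
    have ha1 : a.re = 1 := by simpa [phi, phiFun, Matrix.one_apply] using H 1 1
    have ha2 : a.im = 0 := by simpa [phi, phiFun, Matrix.one_apply] using H 2 1
    have hb1 : b.re = 1 := by simpa [phi, phiFun, Matrix.one_apply] using H 3 3
    have hb2 : b.im = 0 := by simpa [phi, phiFun, Matrix.one_apply] using H 4 3
    have hc1 : c.re = 1 := by simpa [phi, phiFun, Matrix.one_apply] using H 5 5
    have hc2 : c.im = 0 := by simpa [phi, phiFun, Matrix.one_apply] using H 6 5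
    have : (1 : ℝ × ℂ × ℂ × ℂ) = ((1 : ℝ), (1 : ℂ), (1 : ℂ), (1 : ℂ)) := rfl
    rw [this, Prod.ext_iff, Prod.ext_iff, Prod.ext_iff]
    refine ⟨h1, Complex.ext (by simp [ha1]) (by simp [ha2]),
      Complex.ext (by simp [hb1]) (by simp [hb2]),
      Complex.ext (by simp [hc1]) (by simp [hc2])⟩
  · intro h; rw [h]; exact map_one phi

lemma Mexp (a b : ℝ) :
    a • Y3 + b • Z5 =
      phi ((0 : ℝ), (a : ℂ) * Complex.I, (b : ℂ) * Complex.I, ((a : ℂ) + (b : ℂ)) * Complex.I) := by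
  ext i j
  fin_cases i <;> fin_cases j <;>
    (simp [phi, phiFun, Y3, Z5, Gmat, Matrix.vecHead, Matrix.vecTail,
      Complex.mul_re, Complex.mul_im, Complex.add_re, Complex.add_im]) <;>
    (first | rfl | ring)

lemma exp_prod2 {A B : Type*} [NormedRing A] [NormedRing B] [NormedAlgebra ℚ A]
    [NormedAlgebra ℚ B] [CompleteSpace A] [CompleteSpace B] (x : A × B) :
    NormedSpace.exp x = (NormedSpace.exp x.1, NormedSpace.exp x.2) := by
  have a1 : (NormedSpace.exp x).1 = NormedSpace.exp x.1 :=
    Prod.fst_exp x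
  have a2 : (NormedSpace.exp x).2 = NormedSpace.exp x.2 :=
    Prod.snd_exp x
  exact Prod.ext_iff.mpr ⟨a1, a2⟩

lemma expR_complex (z : ℂ) : NormedSpace.exp z = Complex.exp z := by
  rw [Complex.exp_eq_exp_ℂ]

lemma exp_I_eq_one_iff (t : ℝ) :
    Complex.exp ((t : ℂ) * Complex.I) = 1 ↔ ∃ n : ℤ, t = 2 * π * n := by
  rw [Complex.exp_eq_one_iff]
  constructor
  · rintro ⟨n, hn⟩
    refine ⟨n, ?_⟩
    have h2 : (t : ℂ) * Complex.I = ((n : ℂ) * (2 * π)) * Complex.I := by rw [hn]; ring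
    have h3 := mul_right_cancel₀ Complex.I_ne_zero h2
    have h4 : t = (n : ℝ) * (2 * π) := by exact_mod_cast h3
    linarith
  · rintro ⟨n, hn⟩
    exact ⟨n, by rw [hn]; push_cast; ring⟩


lemma rat_lemma (l1 l2 : ℝ) :
    (∃ T : ℝ, 0 < T ∧ (∃ m : ℤ, T * l1 = 2 * π * m) ∧ (∃ n : ℤ, T * l2 = 2 * π * n)) ↔
    (∃ p q : ℚ, (p, q) ≠ (0, 0) ∧ (p : ℝ) * l1 + (q : ℝ) * l2 = 0) := by
  constructor
  · rintro ⟨T, hT, ⟨m, hm⟩, ⟨n, hn⟩⟩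
    by_cases hmn : m = 0 ∧ n = 0
    · have hl1 : l1 = 0 := by
        have : T * l1 = 0 := by rw [hm, hmn.1]; simp
        exact (mul_eq_zero.mp this).resolve_left (ne_of_gt hT)
      exact ⟨1, 0, by simp, by simp [hl1]⟩
    · refine ⟨(n : ℚ), -(m : ℚ), ?_, ?_⟩
      · intro hcon
        apply hmn
        rw [Prod.mk.injEq] at hcon
        obtain ⟨h1, h2⟩ := hcon
        constructor
        · exact_mod_cast neg_eq_zero.mp h2
        · exact_mod_cast h1
      · have key : T * ((n : ℝ) * l1 + (-(m : ℝ)) * l2) = 0 := by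
          have : T * ((n : ℝ) * l1 + (-(m : ℝ)) * l2)
              = (n : ℝ) * (T * l1) - (m : ℝ) * (T * l2) := by ring
          rw [this, hm, hn]; ring
        have := (mul_eq_zero.mp key).resolve_left (ne_of_gt hT)
        push_cast
        push_cast at this
        linarith [this]
  · rintro ⟨p, q, hpq, heq⟩
    by_cases hl1 : l1 = 0
    · by_cases hl2 : l2 = 0
      · exact ⟨1, one_pos, ⟨0, by simp [hl1]⟩, ⟨0, by simp [hl2]⟩⟩
      · rcases lt_or_gt_of_ne hl2 with h | h
        · refine ⟨-(2 * π) / l2, div_pos_of_neg_of_neg (neg_lt_zero.mpr (by positivity)) h, ⟨0, by simp [hl1]⟩, ⟨-1, ?_⟩⟩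
          field_simp; norm_num
        · refine ⟨2 * π / l2, by positivity, ⟨0, by simp [hl1]⟩, ⟨1, ?_⟩⟩
          field_simp; norm_num
    · have hq : q ≠ 0 := by
        rintro rfl
        have hp : p ≠ 0 := by simpa using hpq
        apply hl1
        have : (p : ℝ) * l1 = 0 := by simpa using heq
        exact (mul_eq_zero.mp this).resolve_left (by exact_mod_cast hp)
      set r : ℚ := p / q with hr
      have hl2 : l2 = -(r : ℝ) * l1 := by
        have hqR : (q : ℝ) ≠ 0 := by exact_mod_cast hq
        rw [hr]; push_cast
        rw [eq_comm, neg_mul, div_mul_eq_mul_div, neg_eq_iff_eq_neg, div_eq_iff hqR]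
        linear_combination heq
      have hden : (0 : ℝ) < (r.den : ℝ) := by exact_mod_cast r.pos
      have hnumden : (r : ℝ) * (r.den : ℝ) = (r.num : ℝ) := by
        exact_mod_cast congrArg (fun x : ℚ => (x : ℝ)) (Rat.mul_den_eq_num r)
      rcases lt_or_gt_of_ne hl1 with h | h
      · refine ⟨-(2 * π * r.den) / l1, div_pos_of_neg_of_neg (neg_lt_zero.mpr (by positivity)) h, ⟨-(r.den : ℤ), ?_⟩, ⟨r.num, ?_⟩⟩
        · field_simp; norm_num
        · rw [hl2]
          have : -(2 * π * (r.den : ℝ)) / l1 * (-(r : ℝ) * l1)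
              = 2 * π * ((r : ℝ) * (r.den : ℝ)) * (l1 / l1) := by ring
          rw [this, div_self hl1, hnumden]; ring
      · refine ⟨2 * π * r.den / l1, by positivity, ⟨(r.den : ℤ), ?_⟩, ⟨-r.num, ?_⟩⟩
        · field_simp; norm_num
        · rw [hl2]
          have : 2 * π * (r.den : ℝ) / l1 * (-(r : ℝ) * l1)
              = -(2 * π * ((r : ℝ) * (r.den : ℝ))) * (l1 / l1) := by ring
          rw [this, div_self hl1, hnumden]; push_cast; ring

theorem statement11 (lam1 lam2 : ℝ) (k : Matrix (Fin 7) (Fin 7) ℝ) (hk : IsUnit k) :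
    (∃ T : ℝ, 0 < T ∧ ∀ s : ℝ,
        NormedSpace.exp ((s + T) • (k⁻¹ * (lam1 • Y3 + lam2 • Z5) * k))
          = NormedSpace.exp (s • (k⁻¹ * (lam1 • Y3 + lam2 • Z5) * k))) ↔
    (∃ p q : ℚ, (p, q) ≠ (0, 0) ∧ (p : ℝ) * lam1 + (q : ℝ) * lam2 = 0) := by
  set M : Matrix (Fin 7) (Fin 7) ℝ := lam1 • Y3 + lam2 • Z5 with hM
  set N : Matrix (Fin 7) (Fin 7) ℝ := k⁻¹ * M * k with hN
  have hdet : IsUnit k.det := (Matrix.isUnit_iff_isUnit_det k).mp hk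
  have hk1 : k * k⁻¹ = 1 := Matrix.mul_nonsing_inv k hdet
  have hk2 : k⁻¹ * k = 1 := Matrix.nonsing_inv_mul k hdet
  -- Step 1: periodicity for a given T is equivalent to exp (T • N) = 1
  have hper : ∀ T : ℝ,
      (∀ s : ℝ, NormedSpace.exp ((s + T) • N) = NormedSpace.exp (s • N)) ↔
        NormedSpace.exp (T • N) = 1 := by
    intro T
    constructor
    · intro h
      have h0 := h 0
      simpa [zero_add, zero_smul, NormedSpace.exp_zero] using h0
    · intro h s
      have hcomm : Commute (s • N) (T • N) := ((Commute.refl N).smul_left s).smul_right T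
      rw [add_smul, Matrix.exp_add_of_commute _ _ hcomm, h, mul_one]
  -- Step 2: for a given T, exp (T • N) = 1 iff the two angle conditions hold
  have hstep : ∀ T : ℝ, NormedSpace.exp (T • N) = 1 ↔
      ((∃ m : ℤ, T * lam1 = 2 * π * m) ∧ (∃ n : ℤ, T * lam2 = 2 * π * n)) := by
    intro T
    set a : ℝ := T * lam1
    set b : ℝ := T * lam2
    set v : ℝ × ℂ × ℂ × ℂ :=
      ((0 : ℝ), (a : ℂ) * Complex.I, (b : ℂ) * Complex.I, ((a : ℂ) + (b : ℂ)) * Complex.I) with hv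
    have hTM : T • M = phi v := by
      rw [hM, smul_add, smul_smul, smul_smul]
      exact Mexp a b
    have hsmul : T • N = k⁻¹ * (T • M) * k := by
      rw [hN, Matrix.mul_smul, Matrix.smul_mul]
    have hconj : NormedSpace.exp (T • N) = k⁻¹ * NormedSpace.exp (T • M) * k := by
      rw [hsmul]
      have h := Matrix.exp_units_conj' hk.unit (T • M)
      simp only [Matrix.coe_units_inv, IsUnit.unit_spec] at h
      exact h
    have hexpphi : NormedSpace.exp (phi v) = phi (NormedSpace.exp v) := by
      letI : SeminormedRing (Matrix (Fin 7) (Fin 7) ℝ) := Matrix.linftyOpSemiNormedRing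
      letI : NormedRing (Matrix (Fin 7) (Fin 7) ℝ) := Matrix.linftyOpNormedRing
      letI : NormedAlgebra ℝ (Matrix (Fin 7) (Fin 7) ℝ) := Matrix.linftyOpNormedAlgebra
      exact (NormedSpace.map_exp phi phi_cont v).symm
    have hconj_one : ∀ E : Matrix (Fin 7) (Fin 7) ℝ, k⁻¹ * E * k = 1 ↔ E = 1 := by
      intro E
      constructor
      · intro h
        have h2 : k * (k⁻¹ * E * k) * k⁻¹ = k * 1 * k⁻¹ := by rw [h]
        have h3 : k * (k⁻¹ * E * k) * k⁻¹ = (k * k⁻¹) * E * (k * k⁻¹) := by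
          noncomm_ring
        have h4 : k * 1 * k⁻¹ = k * k⁻¹ := by rw [mul_one]
        rw [h3, h4, hk1, one_mul, mul_one] at h2
        exact h2
      · intro h; rw [h, mul_one, hk2]
    have hprod : NormedSpace.exp v =
        (NormedSpace.exp (0 : ℝ), NormedSpace.exp ((a : ℂ) * Complex.I),
          NormedSpace.exp ((b : ℂ) * Complex.I),
          NormedSpace.exp (((a : ℂ) + (b : ℂ)) * Complex.I)) := by
      rw [hv, exp_prod2, exp_prod2, exp_prod2]
    rw [hconj, hTM, hexpphi, hconj_one, phi_eq_one_iff, hprod]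
    have h1 : (1 : ℝ × ℂ × ℂ × ℂ) = ((1 : ℝ), (1 : ℂ), (1 : ℂ), (1 : ℂ)) := rfl
    rw [h1, Prod.ext_iff, Prod.ext_iff, Prod.ext_iff]
    simp only [NormedSpace.exp_zero, expR_complex, true_and]
    have hab : ((a : ℂ) + (b : ℂ)) * Complex.I = ((a + b : ℝ) : ℂ) * Complex.I := by push_cast; ring
    rw [hab, exp_I_eq_one_iff, exp_I_eq_one_iff, exp_I_eq_one_iff]
    constructor
    · rintro ⟨h1, h2, _⟩; exact ⟨h1, h2⟩
    · rintro ⟨⟨m, hm⟩, ⟨n, hn⟩⟩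
      exact ⟨⟨m, hm⟩, ⟨n, hn⟩, ⟨m + n, by rw [hm, hn] at *; push_cast; ring⟩⟩
  -- Combine
  rw [← rat_lemma lam1 lam2]
  constructor
  · rintro ⟨T, hT, h⟩
    exact ⟨T, hT, (hstep T).mp ((hper T).mp h)⟩
  · rintro ⟨T, hT, h⟩
    exact ⟨T, hT, (hper T).mpr ((hstep T).mpr h)⟩
end
end

section
/- Let u, v ∈ Im 𝕆 be unit vectors with ⟨u, v⟩ = 0. Then u·v ∈ Im 𝕆, ‖u·v‖ = 1, and ⟨u·v, u⟩ = ⟨u·v, v⟩ = 0; that is, the product of two orthonormal imaginary octonions is a unit imaginary octonion orthogonal to both factors. -/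
noncomputable section

private lemma ocomp (x y : Octo) :
    oinner (omul x y) (omul x y) = oinner x x * oinner y y := by
  simp [oinner, omul, Quaternion.re_mul, Quaternion.re_sub, Quaternion.re_add,
    Quaternion.imI_sub, Quaternion.imI_add, Quaternion.imJ_sub, Quaternion.imJ_add,
    Quaternion.imK_sub, Quaternion.imK_add,
    Quaternion.imI_mul, Quaternion.imJ_mul, Quaternion.imK_mul]
  ring

private lemma oleft (x y : Octo) :
    oinner (omul x y) x = oinner x x * y.1.re := by
  simp [oinner, omul, Quaternion.re_mul, Quaternion.re_sub, Quaternion.re_add,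
    Quaternion.imI_sub, Quaternion.imI_add, Quaternion.imJ_sub, Quaternion.imJ_add,
    Quaternion.imK_sub, Quaternion.imK_add,
    Quaternion.imI_mul, Quaternion.imJ_mul, Quaternion.imK_mul]
  ring

private lemma oright (x y : Octo) :
    oinner (omul x y) y = oinner y y * x.1.re := by
  simp [oinner, omul, Quaternion.re_mul, Quaternion.re_sub, Quaternion.re_add,
    Quaternion.imI_sub, Quaternion.imI_add, Quaternion.imJ_sub, Quaternion.imJ_add,
    Quaternion.imK_sub, Quaternion.imK_add,
    Quaternion.imI_mul, Quaternion.imJ_mul, Quaternion.imK_mul]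
  ring

private lemma oRe_mul (x y : Octo) (hy : y.1.re = 0) :
    oRe (omul x y) = -oinner x y := by
  simp [oinner, omul, oRe, Quaternion.re_mul, Quaternion.re_sub, hy]
  ring

theorem statement16 (u v : Octo)
    (hu : isIm u) (hv : isIm v)
    (hun : oinner u u = 1) (hvn : oinner v v = 1)
    (huv : oinner u v = 0) :
    isIm (omul u v) ∧
    Real.sqrt (oinner (omul u v) (omul u v)) = 1 ∧
    oinner (omul u v) u = 0 ∧
    oinner (omul u v) v = 0 := by
  refine ⟨?_, ?_, ?_, ?_⟩
  · rw [isIm, oRe_mul u v hv, huv, neg_zero]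
  · rw [ocomp, hun, hvn, one_mul, Real.sqrt_one]
  · rw [oleft, hun, one_mul]; exact hv
  · rw [oright, hvn, one_mul]; exact hu
end
end
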